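/- Let V be a 4-dimensional vector space and Π a 2-dimensional linear system (net) of quadrics on ℙ(V) = ℙ³ whose base locus consists of 8 distinct points x_1, ..., x_8. If the Hessian curve of Π (the locus of singular quadrics in the net, a plane quartic) is smooth, then no 4 of the 8 base points lie in a common plane of ℙ³. -/

import Mathlib

open Matrix
set_option maxHeartbeats 1000000

variable {𝕜 : Type} [Field 𝕜]


variable {𝕜 : Type} [Field 𝕜]

/-- For a symmetric matrix the associated pairing is symmetric. -/
lemma symm_pair (A : Matrix (Fin 4) (Fin 4) 𝕜) (hA : A.IsSymm) (u v : Fin 4 → 𝕜) :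
    u ⬝ᵥ A *ᵥ v = v ⬝ᵥ A *ᵥ u := by
  have h1 : u ⬝ᵥ A *ᵥ v = (Aᵀ *ᵥ u) ⬝ᵥ v := by
    rw [Matrix.mulVec_transpose, ← Matrix.dotProduct_mulVec]
  rw [h1, hA.eq, dotProduct_comm]

lemma expand2 (A : Matrix (Fin 4) (Fin 4) 𝕜) (p q : Fin 4 → 𝕜) (a b : 𝕜) :
    (a • p + b • q) ⬝ᵥ A *ᵥ (a • p + b • q)
      = a * a * (p ⬝ᵥ A *ᵥ p) + a * b * (p ⬝ᵥ A *ᵥ q) + a * b * (q ⬝ᵥ A *ᵥ p)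
        + b * b * (q ⬝ᵥ A *ᵥ q) := by
  simp only [Matrix.mulVec_add, Matrix.mulVec_smul, dotProduct_add,
    add_dotProduct, smul_dotProduct, dotProduct_smul, smul_eq_mul]
  ring

lemma expand3 (A : Matrix (Fin 4) (Fin 4) 𝕜) (p q r : Fin 4 → 𝕜) (a b c : 𝕜) :
    (a • p + b • q + c • r) ⬝ᵥ A *ᵥ (a • p + b • q + c • r)
      = a * a * (p ⬝ᵥ A *ᵥ p) + b * b * (q ⬝ᵥ A *ᵥ q) + c * c * (r ⬝ᵥ A *ᵥ r)
        + a * b * (p ⬝ᵥ A *ᵥ q) + a * b * (q ⬝ᵥ A *ᵥ p)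
        + a * c * (p ⬝ᵥ A *ᵥ r) + a * c * (r ⬝ᵥ A *ᵥ p)
        + b * c * (q ⬝ᵥ A *ᵥ r) + b * c * (r ⬝ᵥ A *ᵥ q) := by
  simp only [Matrix.mulVec_add, Matrix.mulVec_smul, dotProduct_add,
    add_dotProduct, smul_dotProduct, dotProduct_smul, smul_eq_mul]
  ring

lemma pigeonhole_base (x : Fin 8 → Fin 4 → 𝕜) (u w : Fin 4 → 𝕜)
    (hw : w ≠ 0) (hu : ∀ c : 𝕜, u ≠ c • w)
    (t : Fin 9 → 𝕜) (ht : Function.Injective t)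
    (hbp : ∀ k : Fin 9, ∃ i, ∃ c : 𝕜, u + t k • w = c • x i) : False := by
  choose i c hic using hbp
  obtain ⟨k, l, hkl, hi⟩ := Fintype.exists_ne_map_eq_of_card_lt i (by simp)
  have htkl : t k - t l ≠ 0 := sub_ne_zero.2 fun h => hkl (ht h)
  have e1 := hic k
  rw [hi] at e1
  have e2 := hic l
  have h1 : (t k - t l) • w = (c k - c l) • x (i l) := by
    have h0 : (t k - t l) • w = (u + t k • w) - (u + t l • w) := by
      rw [sub_smul]; abel
    rw [h0, e1, e2, ← sub_smul]
  set d := (t k - t l)⁻¹ * (c k - c l) with hd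
  have hw2 : w = d • x (i l) := by
    rw [hd, mul_smul, ← h1, smul_smul, inv_mul_cancel₀ htkl, one_smul]
  have hdne : d ≠ 0 := fun h => hw (by rw [hw2, h, zero_smul])
  have hx0 : x (i l) = d⁻¹ • w := by
    rw [hw2, smul_smul, inv_mul_cancel₀ hdne, one_smul]
  apply hu (c k * d⁻¹ - t k)
  have h2 : u = c k • x (i l) - t k • w := by rw [← e1]; abel
  rw [h2, hx0, smul_smul, ← sub_smul]

lemma line_in_base_locus [Infinite 𝕜] (N : Submodule 𝕜 (Matrix (Fin 4) (Fin 4) 𝕜))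
    (x : Fin 8 → Fin 4 → 𝕜)
    (hbase_only : ∀ v : Fin 4 → 𝕜, v ≠ 0 →
      (∀ A ∈ N, dotProduct v (A.mulVec v) = 0) → ∃ i, ∃ c : 𝕜, v = c • x i)
    (u w : Fin 4 → 𝕜) (hw : w ≠ 0) (hu : ∀ c : 𝕜, u ≠ c • w)
    (hq : ∀ t : 𝕜, ∀ A ∈ N, (u + t • w) ⬝ᵥ A *ᵥ (u + t • w) = 0) : False := by
  set t : Fin 9 → 𝕜 := fun k => Infinite.natEmbedding 𝕜 k with htdef
  have ht : Function.Injective t := by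
    intro a b h
    exact Fin.val_injective ((Infinite.natEmbedding 𝕜).injective h)
  apply pigeonhole_base x u w hw hu t ht
  intro k
  apply hbase_only
  · intro h0
    exact hu (-(t k)) (by rw [neg_smul, eq_neg_iff_add_eq_zero]; exact h0)
  · exact hq (t k)

/-- The pairing with fixed vectors, as a linear map in the matrix. -/
def pairLM (u v : Fin 4 → 𝕜) : Matrix (Fin 4) (Fin 4) 𝕜 →ₗ[𝕜] 𝕜 where
  toFun A := u ⬝ᵥ A *ᵥ v
  map_add' A B := by simp [Matrix.add_mulVec, dotProduct_add]
  map_smul' c A := by simp [Matrix.smul_mulVec, dotProduct_smul]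

lemma exists_ker (N : Submodule 𝕜 (Matrix (Fin 4) (Fin 4) 𝕜))
    (hdim : Module.finrank 𝕜 N = 3)
    (f : N →ₗ[𝕜] (Fin 2 → 𝕜)) : ∃ A : N, A ≠ 0 ∧ f A = 0 := by
  by_contra h
  push_neg at h
  have hker : ∀ A : N, f A = 0 → A = 0 := by
    intro A hA
    by_contra h0
    exact h A h0 hA
  have hinj : Function.Injective f :=
    LinearMap.ker_eq_bot.mp (LinearMap.ker_eq_bot'.mpr hker)
  have hle := LinearMap.finrank_le_finrank_of_injective hinj
  rw [hdim, Module.finrank_fin_fun] at hle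
  omega

lemma det_eq_zero_of_two_rows (M : Matrix (Fin 4) (Fin 4) 𝕜) (i j : Fin 4) (hij : i ≠ j)
    (u : Fin 4 → 𝕜) (a b : 𝕜) (hi : M i = a • u) (hj : M j = b • u) : M.det = 0 := by
  by_cases ha : a = 0
  · exact Matrix.det_eq_zero_of_row_eq_zero i (fun c => by simp [hi, ha])
  · have h := Matrix.det_updateRow_add_smul_self M hij.symm (-(b / a))
    rw [← h]
    apply Matrix.det_eq_zero_of_row_eq_zero j
    intro czz
    rw [Matrix.updateRow_self]
    simp only [Pi.add_apply, Pi.smul_apply, hi, hj, smul_eq_mul]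
    field_simp
    ring

lemma adjugate_eq_zero_of_shape (M : Matrix (Fin 4) (Fin 4) 𝕜)
    (hM : ∀ i j, i ≠ 3 → j ≠ 3 → M i j = 0) : M.adjugate = 0 := by
  set u0 : Fin 4 → 𝕜 := Pi.single (3 : Fin 4) (1 : 𝕜) with hu0
  have hrow : ∀ r : Fin 4, r ≠ 3 → M r = (M r 3) • u0 := by
    intro r hr
    funext cc
    by_cases hc : cc = 3
    · subst hc; simp [hu0]
    · simp [hM r cc hr hc, hu0, Pi.single_apply, hc]
  ext i j
  rw [Matrix.adjugate_apply, Matrix.zero_apply]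
  have hex : ∃ r1 r2 : Fin 4, r1 ≠ r2 ∧ r1 ≠ j ∧ r2 ≠ j ∧ r1 ≠ 3 ∧ r2 ≠ 3 := by
    fin_cases j
    · exact ⟨1, 2, by decide, by decide, by decide, by decide, by decide⟩
    · exact ⟨0, 2, by decide, by decide, by decide, by decide, by decide⟩
    · exact ⟨0, 1, by decide, by decide, by decide, by decide, by decide⟩
    · exact ⟨0, 1, by decide, by decide, by decide, by decide, by decide⟩
  obtain ⟨r1, r2, h12, h1j, h2j, h13, h23⟩ := hex
  apply det_eq_zero_of_two_rows _ r1 r2 h12 u0 (M r1 3) (M r2 3)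
  · rw [Matrix.updateRow_ne h1j]; exact hrow r1 h13
  · rw [Matrix.updateRow_ne h2j]; exact hrow r2 h23

lemma conj_entry (A P : Matrix (Fin 4) (Fin 4) 𝕜) (v : Fin 4 → (Fin 4 → 𝕜))
    (hP : ∀ a b, P a b = v b a) (i j : Fin 4) :
    (Pᵀ * A * P) i j = v i ⬝ᵥ A *ᵥ v j := by
  simp only [Matrix.mul_apply, Matrix.transpose_apply, dotProduct, Matrix.mulVec, hP,
    Finset.sum_mul, Finset.mul_sum]
  rw [Finset.sum_comm]
  apply Finset.sum_congr rfl
  intro kk _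
  apply Finset.sum_congr rfl
  intro ll _
  ring

lemma adjugate_zero_transfer (A P P' : Matrix (Fin 4) (Fin 4) 𝕜)
    (hPP' : P * P' = 1)
    (h0 : (Pᵀ * A * P).adjugate = 0) : A.adjugate = 0 := by
  have hdet : P.det * P'.det = 1 := by rw [← Matrix.det_mul, hPP', Matrix.det_one]
  have hdP : P.det ≠ 0 := fun h => by rw [h, zero_mul] at hdet; exact zero_ne_one hdet
  have e : (Pᵀ * A * P).adjugate = P.adjugate * (A.adjugate * Pᵀ.adjugate) := by
    rw [Matrix.adjugate_mul_distrib, Matrix.adjugate_mul_distrib]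
  have h2 : P * (Pᵀ * A * P).adjugate = 0 := by rw [h0, Matrix.mul_zero]
  rw [e, ← Matrix.mul_assoc, Matrix.mul_adjugate, Matrix.smul_mul, Matrix.one_mul] at h2
  have h3 : A.adjugate * Pᵀ.adjugate = 0 := (smul_eq_zero.mp h2).resolve_left hdP
  have h4 : A.adjugate * (Pᵀ.adjugate * Pᵀ) = 0 := by
    rw [← Matrix.mul_assoc, h3, Matrix.zero_mul]
  rw [Matrix.adjugate_mul, Matrix.det_transpose, Matrix.mul_smul, Matrix.mul_one] at h4
  exact (smul_eq_zero.mp h4).resolve_left hdP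

lemma main_case (N : Submodule 𝕜 (Matrix (Fin 4) (Fin 4) 𝕜))
    (hsymm : ∀ A ∈ N, A.IsSymm) (hdim : Module.finrank 𝕜 N = 3) (two : (2:𝕜) ≠ 0)
    (y : Fin 4 → (Fin 4 → 𝕜)) (h012 : LinearIndependent 𝕜 ![y 0, y 1, y 2])
    (α β γ : 𝕜) (hy3 : y 3 = α • y 0 + β • y 1 + γ • y 2)
    (hprod : α * β ≠ 0 ∨ α * γ ≠ 0 ∨ β * γ ≠ 0)
    (hq : ∀ k, ∀ A ∈ N, y k ⬝ᵥ A *ᵥ y k = 0) :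
    ∃ A ∈ N, A ≠ 0 ∧ A.adjugate = 0 ∧ A.det = 0 := by
  have hrel : ∀ A ∈ N, α * β * (y 0 ⬝ᵥ A *ᵥ y 1) + α * γ * (y 0 ⬝ᵥ A *ᵥ y 2)
      + β * γ * (y 1 ⬝ᵥ A *ᵥ y 2) = 0 := by
    intro A hA
    have h3 := hq 3 A hA
    rw [hy3, expand3] at h3
    have hs := symm_pair A (hsymm A hA)
    rw [hq 0 A hA, hq 1 A hA, hq 2 A hA, hs (y 1) (y 0), hs (y 2) (y 0), hs (y 2) (y 1)] at h3
    have h4 : 2 * (α * β * (y 0 ⬝ᵥ A *ᵥ y 1) + α * γ * (y 0 ⬝ᵥ A *ᵥ y 2)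
        + β * γ * (y 1 ⬝ᵥ A *ᵥ y 2)) = 0 := by linear_combination h3
    exact (mul_eq_zero.mp h4).resolve_left two
  have key : ∃ A₀, A₀ ∈ N ∧ A₀ ≠ 0 ∧ (y 0 ⬝ᵥ A₀ *ᵥ y 1) = 0 ∧ (y 0 ⬝ᵥ A₀ *ᵥ y 2) = 0
      ∧ (y 1 ⬝ᵥ A₀ *ᵥ y 2) = 0 := by
    rcases hprod with h | h | h
    · obtain ⟨A, hA0, hfA⟩ := exists_ker N hdim
        (LinearMap.pi ![(pairLM (y 0) (y 2)).comp N.subtype, (pairLM (y 1) (y 2)).comp N.subtype])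
      have h02 : y 0 ⬝ᵥ (A : Matrix (Fin 4) (Fin 4) 𝕜) *ᵥ y 2 = 0 := by
        simpa [pairLM] using congrFun hfA 0
      have h12 : y 1 ⬝ᵥ (A : Matrix (Fin 4) (Fin 4) 𝕜) *ᵥ y 2 = 0 := by
        simpa [pairLM] using congrFun hfA 1
      have h01 : y 0 ⬝ᵥ (A : Matrix (Fin 4) (Fin 4) 𝕜) *ᵥ y 1 = 0 := by
        have hr := hrel A A.2
        rw [h02, h12] at hr
        have h5 : α * β * (y 0 ⬝ᵥ (A : Matrix (Fin 4) (Fin 4) 𝕜) *ᵥ y 1) = 0 := by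
          linear_combination hr
        exact (mul_eq_zero.mp h5).resolve_left h
      exact ⟨A, A.2, by simpa using hA0, h01, h02, h12⟩
    · obtain ⟨A, hA0, hfA⟩ := exists_ker N hdim
        (LinearMap.pi ![(pairLM (y 0) (y 1)).comp N.subtype, (pairLM (y 1) (y 2)).comp N.subtype])
      have h01 : y 0 ⬝ᵥ (A : Matrix (Fin 4) (Fin 4) 𝕜) *ᵥ y 1 = 0 := by
        simpa [pairLM] using congrFun hfA 0
      have h12 : y 1 ⬝ᵥ (A : Matrix (Fin 4) (Fin 4) 𝕜) *ᵥ y 2 = 0 := by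
        simpa [pairLM] using congrFun hfA 1
      have h02 : y 0 ⬝ᵥ (A : Matrix (Fin 4) (Fin 4) 𝕜) *ᵥ y 2 = 0 := by
        have hr := hrel A A.2
        rw [h01, h12] at hr
        have h5 : α * γ * (y 0 ⬝ᵥ (A : Matrix (Fin 4) (Fin 4) 𝕜) *ᵥ y 2) = 0 := by
          linear_combination hr
        exact (mul_eq_zero.mp h5).resolve_left h
      exact ⟨A, A.2, by simpa using hA0, h01, h02, h12⟩
    · obtain ⟨A, hA0, hfA⟩ := exists_ker N hdim
        (LinearMap.pi ![(pairLM (y 0) (y 1)).comp N.subtype, (pairLM (y 0) (y 2)).comp N.subtype])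
      have h01 : y 0 ⬝ᵥ (A : Matrix (Fin 4) (Fin 4) 𝕜) *ᵥ y 1 = 0 := by
        simpa [pairLM] using congrFun hfA 0
      have h02 : y 0 ⬝ᵥ (A : Matrix (Fin 4) (Fin 4) 𝕜) *ᵥ y 2 = 0 := by
        simpa [pairLM] using congrFun hfA 1
      have h12 : y 1 ⬝ᵥ (A : Matrix (Fin 4) (Fin 4) 𝕜) *ᵥ y 2 = 0 := by
        have hr := hrel A A.2
        rw [h01, h02] at hr
        have h5 : β * γ * (y 1 ⬝ᵥ (A : Matrix (Fin 4) (Fin 4) 𝕜) *ᵥ y 2) = 0 := by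
          linear_combination hr
        exact (mul_eq_zero.mp h5).resolve_left h
      exact ⟨A, A.2, by simpa using hA0, h01, h02, h12⟩
  obtain ⟨A0, hmem, hne, h01, h02, h12⟩ := key
  have hs := symm_pair A0 (hsymm A0 hmem)
  -- all pairings among y 0, y 1, y 2 vanish
  have h10 : y 1 ⬝ᵥ A0 *ᵥ y 0 = 0 := by rw [hs (y 1) (y 0)]; exact h01
  have h20 : y 2 ⬝ᵥ A0 *ᵥ y 0 = 0 := by rw [hs (y 2) (y 0)]; exact h02
  have h21 : y 2 ⬝ᵥ A0 *ᵥ y 1 = 0 := by rw [hs (y 2) (y 1)]; exact h12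
  have hq0 := hq 0 A0 hmem
  have hq1 := hq 1 A0 hmem
  have hq2 := hq 2 A0 hmem
  have hB : ∀ i j : Fin 4, i ≠ 3 → j ≠ 3 → y i ⬝ᵥ A0 *ᵥ y j = 0 := by
    intro i j hi hj
    fin_cases i <;> fin_cases j <;>
      first
        | exact absurd rfl hi
        | exact absurd rfl hj
        | assumption
  -- extend to a basis
  have hne_top : Submodule.span 𝕜 (Set.range ![y 0, y 1, y 2]) ≠ ⊤ := by
    intro h
    have b : Module.Basis (Fin 3) 𝕜 (Fin 4 → 𝕜) := Module.Basis.mk h012 (by rw [h])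
    have hc := Module.finrank_eq_card_basis b
    rw [Module.finrank_fin_fun] at hc
    simp at hc
  have hex : ∃ e, e ∉ Submodule.span 𝕜 (Set.range ![y 0, y 1, y 2]) := by
    by_contra h
    push_neg at h
    exact hne_top (eq_top_iff.mpr fun v _ => h v)
  obtain ⟨e, he⟩ := hex
  have hv : LinearIndependent 𝕜 (Fin.snoc ![y 0, y 1, y 2] e : Fin 4 → Fin 4 → 𝕜) :=
    linearIndependent_fin_snoc.mpr ⟨h012, he⟩
  set v : Fin 4 → Fin 4 → 𝕜 := Fin.snoc ![y 0, y 1, y 2] e with hvdef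
  have hvi : ∀ i : Fin 4, i ≠ 3 → v i = y i := by
    intro i hi
    fin_cases i
    · show v 0 = y 0
      simp [hvdef, Fin.snoc]
    · show v 1 = y 1
      simp [hvdef, Fin.snoc]
    · show v 2 = y 2
      simp [hvdef, Fin.snoc]
    · exact absurd rfl hi
  have hcard : Fintype.card (Fin 4) = Module.finrank 𝕜 (Fin 4 → 𝕜) := by
    rw [Module.finrank_fin_fun]; simp
  set bv := basisOfLinearIndependentOfCardEqFinrank hv hcard with hbvdef
  have hbv : ⇑bv = v := coe_basisOfLinearIndependentOfCardEqFinrank hv hcard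
  set P := (Pi.basisFun 𝕜 (Fin 4)).toMatrix ⇑bv with hPdef
  have hPentry : ∀ a b, P a b = v b a := by
    intro a b
    rw [hPdef, Module.Basis.toMatrix_apply, hbv]
    simp
  have hPP' : P * bv.toMatrix ⇑(Pi.basisFun 𝕜 (Fin 4)) = 1 :=
    Module.Basis.toMatrix_mul_toMatrix_flip _ _
  have hM : ∀ i j, i ≠ 3 → j ≠ 3 → (Pᵀ * A0 * P) i j = 0 := by
    intro i j hi hj
    rw [conj_entry A0 P v hPentry, hvi i hi, hvi j hj]
    exact hB i j hi hj
  have hadjM : (Pᵀ * A0 * P).adjugate = 0 := adjugate_eq_zero_of_shape _ hM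
  have hadj : A0.adjugate = 0 := adjugate_zero_transfer A0 P _ hPP' hadjM
  have hdet : A0.det = 0 := by
    have hmul := Matrix.mul_adjugate A0
    rw [hadj, Matrix.mul_zero] at hmul
    have h00 := congrFun (congrFun hmul.symm 0) 0
    simpa [Matrix.smul_apply, Matrix.one_apply] using h00
  exact ⟨A0, hmem, hne, hadj, hdet⟩

lemma dep_triple_case [Infinite 𝕜] (N : Submodule 𝕜 (Matrix (Fin 4) (Fin 4) 𝕜))
    (x : Fin 8 → Fin 4 → 𝕜)
    (hbase_only : ∀ v : Fin 4 → 𝕜, v ≠ 0 →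
      (∀ A ∈ N, dotProduct v (A.mulVec v) = 0) → ∃ i, ∃ c : 𝕜, v = c • x i)
    (u w z : Fin 4 → 𝕜) (a b : 𝕜) (ha : a ≠ 0) (hb : b ≠ 0)
    (hz : z = a • u + b • w) (hw : w ≠ 0) (hu : ∀ c : 𝕜, u ≠ c • w)
    (hqu : ∀ A ∈ N, u ⬝ᵥ A *ᵥ u = 0) (hqw : ∀ A ∈ N, w ⬝ᵥ A *ᵥ w = 0)
    (hqz : ∀ A ∈ N, z ⬝ᵥ A *ᵥ z = 0) : False := by
  apply line_in_base_locus N x hbase_only u w hw hu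
  intro t A hA
  have hS : u ⬝ᵥ A *ᵥ w + w ⬝ᵥ A *ᵥ u = 0 := by
    have h := hqz A hA
    rw [hz, expand2, hqu A hA, hqw A hA] at h
    have h2 : (a * b) * (u ⬝ᵥ A *ᵥ w + w ⬝ᵥ A *ᵥ u) = 0 := by linear_combination h
    exact (mul_eq_zero.mp h2).resolve_left (mul_ne_zero ha hb)
  rw [show u + t • w = (1:𝕜) • u + t • w by rw [one_smul], expand2, hqu A hA, hqw A hA]
  linear_combination t * hS

lemma rel3_case [Infinite 𝕜] (N : Submodule 𝕜 (Matrix (Fin 4) (Fin 4) 𝕜))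
    (x : Fin 8 → Fin 4 → 𝕜)
    (hbase_only : ∀ v : Fin 4 → 𝕜, v ≠ 0 →
      (∀ A ∈ N, dotProduct v (A.mulVec v) = 0) → ∃ i, ∃ c : 𝕜, v = c • x i)
    (p q r : Fin 4 → 𝕜) (cp cq cr : 𝕜)
    (hrel : cp • p + cq • q + cr • r = 0) (hcp : cp ≠ 0)
    (hq0 : q ≠ 0) (hr0 : r ≠ 0)
    (hpq : ∀ c : 𝕜, p ≠ c • q) (hpr : ∀ c : 𝕜, p ≠ c • r) (hqr : ∀ c : 𝕜, q ≠ c • r)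
    (hQp : ∀ A ∈ N, p ⬝ᵥ A *ᵥ p = 0) (hQq : ∀ A ∈ N, q ⬝ᵥ A *ᵥ q = 0)
    (hQr : ∀ A ∈ N, r ⬝ᵥ A *ᵥ r = 0) : False := by
  have hz : p = (-(cp⁻¹ * cq)) • q + (-(cp⁻¹ * cr)) • r := by
    have h2 : p = cp⁻¹ • (cp • p) := by rw [smul_smul, inv_mul_cancel₀ hcp, one_smul]
    have h3 : cp • p = -(cq • q + cr • r) := by
      rw [eq_neg_iff_add_eq_zero, ← hrel]; abel
    rw [h2, h3, smul_neg, smul_add, smul_smul, smul_smul, neg_add, ← neg_smul, ← neg_smul]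
  by_cases hA0 : -(cp⁻¹ * cq) = 0
  · rw [hA0, zero_smul, zero_add] at hz
    exact hpr _ hz
  by_cases hB0 : -(cp⁻¹ * cr) = 0
  · rw [hB0, zero_smul, add_zero] at hz
    exact hpq _ hz
  exact dep_triple_case N x hbase_only q r p _ _ hA0 hB0 hz hr0 hqr hQq hQr hQp


/-!
Let `Π` be a net (3-dimensional space) of quadrics on `ℙ³` — realized as a
3-dimensional subspace `N` of symmetric 4×4 matrices — whose base locus
consists of 8 distinct points `x₁, …, x₈`.  If the Hessian curve of the net
(the plane quartic `{det = 0} ⊂ ℙ(N)`) is smooth, then no 4 of the 8 base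
points lie in a common plane, i.e. every 4 of them are linearly independent
in `𝕜⁴`.

Smoothness of the determinantal quartic is expressed by: for every nonzero
`A ∈ N` with `det A = 0`, some directional derivative
`d/dt det(A + tP)|₀ = tr(adj(A)·P)`, `P ∈ N`, is nonzero.
-/

theorem smooth_hessian_implies_base_points_in_general_position
    (𝕜 : Type) [Field 𝕜] [IsAlgClosed 𝕜]
    (N : Submodule 𝕜 (Matrix (Fin 4) (Fin 4) 𝕜))
    (hsymm : ∀ A ∈ N, A.IsSymm)
    (hdim : Module.finrank 𝕜 N = 3)
    (x : Fin 8 → (Fin 4 → 𝕜))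
    (hx_ne : ∀ i, x i ≠ 0)
    (hx_distinct : ∀ i j : Fin 8, i ≠ j → ∀ c : 𝕜, x i ≠ c • x j)
    (hbase : ∀ i, ∀ A ∈ N, dotProduct (x i) (A.mulVec (x i)) = 0)
    (hbase_only : ∀ v : Fin 4 → 𝕜, v ≠ 0 →
      (∀ A ∈ N, dotProduct v (A.mulVec v) = 0) → ∃ i, ∃ c : 𝕜, v = c • x i)
    (hessian_smooth : ∀ A ∈ N, A ≠ 0 → A.det = 0 →
      ∃ P ∈ N, Matrix.trace (A.adjugate * P) ≠ 0) :
    ∀ s : Finset (Fin 8), s.card = 4 →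
      LinearIndependent 𝕜 (fun i : s => x i) := by
  intro s hs
  -- characteristic 2 is impossible
  have two : (2:𝕜) ≠ 0 := by
    intro h2
    apply line_in_base_locus N x hbase_only (x 0) (x 1) (hx_ne 1) (hx_distinct 0 1 (by decide))
    intro t A hA
    rw [show x 0 + t • x 1 = (1:𝕜) • x 0 + t • x 1 by rw [one_smul], expand2,
      hbase 0 A hA, hbase 1 A hA, symm_pair A (hsymm A hA) (x 1) (x 0)]
    linear_combination (t * (x 0 ⬝ᵥ A *ᵥ x 1)) * h2
  set e := s.orderIsoOfFin hs with hedef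
  set y : Fin 4 → (Fin 4 → 𝕜) := fun k => x (e k) with hydef
  have hcomp : (fun i : s => x i) ∘ ⇑e.toEquiv = y := rfl
  refine (linearIndependent_equiv' e.toEquiv hcomp).mp ?_
  have hidx : ∀ k l : Fin 4, k ≠ l → ((e k : Fin 8)) ≠ ((e l : Fin 8)) := by
    intro k l hkl hc
    exact hkl (e.injective (Subtype.ext hc))
  have hxd : ∀ k l : Fin 4, k ≠ l → ∀ c : 𝕜, y k ≠ c • y l := by
    intro k l hkl c
    exact hx_distinct _ _ (hidx k l hkl) c
  have hyne : ∀ k, y k ≠ 0 := fun k => hx_ne _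
  have hqy : ∀ k, ∀ A ∈ N, y k ⬝ᵥ A *ᵥ y k = 0 := fun k A hA => hbase _ A hA
  by_contra hdep
  rw [Fintype.not_linearIndependent_iff] at hdep
  obtain ⟨g, hg, i0, hi0⟩ := hdep
  rw [Fin.sum_univ_four] at hg
  by_cases h012 : LinearIndependent 𝕜 ![y 0, y 1, y 2]
  · -- three independent, the fourth lies in their span: main case
    have hg3 : g 3 ≠ 0 := by
      intro h3
      have hsum' : ∑ k : Fin 3, (![g 0, g 1, g 2]) k • (![y 0, y 1, y 2]) k = 0 := by
        simp only [Fin.sum_univ_three]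
        simp only [Matrix.cons_val_zero, Matrix.cons_val_one, Matrix.head_cons,
          Matrix.cons_val_two, Matrix.tail_cons]
        rw [h3, zero_smul, add_zero] at hg
        exact hg
      have hz := Fintype.linearIndependent_iff.mp h012 _ hsum'
      fin_cases i0
      · exact hi0 (by simpa using hz 0)
      · exact hi0 (by simpa using hz 1)
      · exact hi0 (by simpa using hz 2)
      · exact hi0 h3
    set α := -((g 3)⁻¹ * g 0) with hα
    set β := -((g 3)⁻¹ * g 1) with hβ
    set γ := -((g 3)⁻¹ * g 2) with hγ
    have hy3 : y 3 = α • y 0 + β • y 1 + γ • y 2 := by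
      have h2 : y 3 = (g 3)⁻¹ • (g 3 • y 3) := by
        rw [smul_smul, inv_mul_cancel₀ hg3, one_smul]
      have h3 : g 3 • y 3 = -(g 0 • y 0 + g 1 • y 1 + g 2 • y 2) := by
        rw [eq_neg_iff_add_eq_zero, ← hg]; abel
      rw [h2, h3, smul_neg, smul_add, smul_add, smul_smul, smul_smul, smul_smul,
        neg_add, neg_add, ← neg_smul, ← neg_smul, ← neg_smul, hα, hβ, hγ]
    have hn1 : ¬(β = 0 ∧ γ = 0) := by
      rintro ⟨hb, hc⟩
      exact hxd 3 0 (by decide) α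
        (by rw [hy3, hb, hc, zero_smul, zero_smul, add_zero, add_zero])
    have hn2 : ¬(α = 0 ∧ γ = 0) := by
      rintro ⟨hb, hc⟩
      exact hxd 3 1 (by decide) β
        (by rw [hy3, hb, hc, zero_smul, zero_smul, zero_add, add_zero])
    have hn3 : ¬(α = 0 ∧ β = 0) := by
      rintro ⟨hb, hc⟩
      exact hxd 3 2 (by decide) γ
        (by rw [hy3, hb, hc, zero_smul, zero_smul, zero_add, zero_add])
    have hprod : α * β ≠ 0 ∨ α * γ ≠ 0 ∨ β * γ ≠ 0 := by
      by_cases ha : α = 0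
      · right; right
        exact mul_ne_zero (fun hb => hn3 ⟨ha, hb⟩) (fun hc => hn2 ⟨ha, hc⟩)
      · by_cases hb : β = 0
        · right; left
          exact mul_ne_zero ha (fun hc => hn1 ⟨hb, hc⟩)
        · left; exact mul_ne_zero ha hb
    obtain ⟨A, hmem, hne, hadj, hdet⟩ :=
      main_case N hsymm hdim two y h012 α β γ hy3 hprod hqy
    obtain ⟨P0, hP0, htr⟩ := hessian_smooth A hmem hne hdet
    rw [hadj] at htr
    simp at htr
  · -- three of the points are linearly dependent
    rw [Fintype.not_linearIndependent_iff] at h012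
    obtain ⟨g', hg', k0, hk0⟩ := h012
    rw [Fin.sum_univ_three] at hg'
    simp only [Matrix.cons_val_zero, Matrix.cons_val_one, Matrix.head_cons,
      Matrix.cons_val_two, Matrix.tail_cons] at hg'
    fin_cases k0
    · refine rel3_case N x hbase_only (y 0) (y 1) (y 2) (g' 0) (g' 1) (g' 2) hg' hk0
        (hyne 1) (hyne 2) (hxd 0 1 (by decide)) (hxd 0 2 (by decide)) (hxd 1 2 (by decide))
        (hqy 0) (hqy 1) (hqy 2)
    · refine rel3_case N x hbase_only (y 1) (y 0) (y 2) (g' 1) (g' 0) (g' 2) ?_ hk0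
        (hyne 0) (hyne 2) (hxd 1 0 (by decide)) (hxd 1 2 (by decide)) (hxd 0 2 (by decide))
        (hqy 1) (hqy 0) (hqy 2)
      rw [← hg']; abel
    · refine rel3_case N x hbase_only (y 2) (y 0) (y 1) (g' 2) (g' 0) (g' 1) ?_ hk0
        (hyne 0) (hyne 1) (hxd 2 0 (by decide)) (hxd 2 1 (by decide)) (hxd 0 1 (by decide))
        (hqy 2) (hqy 0) (hqy 1)
      rw [← hg']; abel
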